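/- Let 𝒜 be the structure with underlying set ω × ℚ in the language with a binary relation symbol E and a binary relation symbol ≺, where E((i,p),(j,q)) holds iff i = j, and (i,p) ≺ (j,q) holds iff i < j or (i = j and p < q) (so 𝒜 is a convexly ordered equivalence relation with infinitely many classes, each densely ordered). Let ℬ be the structure with underlying set ℚ^{<ω} (finite sequences of rationals) in the language with binary relation symbols ⊴, <_lex, <_len and a binary function symbol ∧, where: η ⊴ ν iff η is an initial segment of ν; η ∧ ν is the longest common initial segment of η and ν; η <_lex ν iff either η is a proper initial segment of ν, or η(k) < ν(k) where k is the length of η ∧ ν; and η <_len ν iff the length of η is less than the length of ν. Then 𝒜 is a semi-retract of ℬ. -/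

import Mathlib

open FirstOrder FirstOrder.Language

/-- Two same-length tuples have the same quantifier-free type over ∅. -/
def SameQfType (L : FirstOrder.Language) (M : Type*) [L.Structure M] {n : ℕ}
    (x y : Fin n → M) : Prop :=
  ∀ φ : L.Formula (Fin n), φ.IsQF → (φ.Realize x ↔ φ.Realize y)

/-- A qftp-respecting injection between structures in possibly different languages. -/
def QftpRespecting (L L' : FirstOrder.Language) (M N : Type*) [L.Structure M] [L'.Structure N]
    (h : M → N) : Prop :=
  Function.Injective h ∧
    ∀ (n : ℕ) (x y : Fin n → M), SameQfType L M x y → SameQfType L' N (h ∘ x) (h ∘ y)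

/-- `(g, f)` is a semi-retraction between `M` and `N`: both maps are qftp-respecting
injections and `f ∘ g` is qftp-preserving (equivalently, an `L`-embedding of `M` into `M`). -/
def IsSemiRetraction (L L' : FirstOrder.Language) (M N : Type*)
    [L.Structure M] [L'.Structure N] (g : M → N) (f : N → M) : Prop :=
  QftpRespecting L L' M N g ∧ QftpRespecting L' L N M f ∧
    ∀ (n : ℕ) (x : Fin n → M), SameQfType L M x (f ∘ g ∘ x)

/-- `M` is locally finite: every finitely generated substructure is finite. -/
def StructLocallyFinite (L : FirstOrder.Language) (M : Type*) [L.Structure M] : Prop :=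
  ∀ S : L.Substructure M, S.FG → (S : Set M).Finite

/-- `M → (B)^A_{r,d}` for substructures. -/
def ArrowSub (L : FirstOrder.Language) (M : Type*) [L.Structure M]
    (A B : L.Substructure M) (r d : ℕ) : Prop :=
  ∀ c : L.Substructure M → Fin r, ∃ B' : L.Substructure M,
    Nonempty (B' ≃[L] B) ∧
      (c '' {A' : L.Substructure M | A' ≤ B' ∧ Nonempty (A' ≃[L] A)}).ncard ≤ d

/-- `M →ᵉ (B)^A_{r,d}` for embeddings. -/
def ArrowEmb (L : FirstOrder.Language) (M : Type*) [L.Structure M]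
    (A B : L.Substructure M) (r d : ℕ) : Prop :=
  ∀ c : (A ↪[L] M) → Fin r, ∃ h : B ↪[L] M,
    (c '' {j : A ↪[L] M | ∃ e : A ↪[L] B, j = h.comp e}).ncard ≤ d

/-- A structure is rigid if its only automorphism is the identity. -/
def IsRigidStructure (L : FirstOrder.Language) (M : Type*) [L.Structure M] : Prop :=
  ∀ σ : M ≃[L] M, ∀ x : M, σ x = x


/-- The relation symbols of the language of convexly ordered equivalence relations:
`E` (equivalence) and `≺` (order), both binary. -/
inductive ConvRel : ℕ → Type
  | eqv : ConvRel 2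
  | prec : ConvRel 2

/-- The language `{E, ≺}` of convexly ordered equivalence relations. -/
def Lconv : FirstOrder.Language :=
  ⟨fun _ => Empty, ConvRel⟩

/-- The structure `𝒜` on `ω × ℚ`: `E((i,p),(j,q))` iff `i = j`, and `(i,p) ≺ (j,q)` iff
`i < j` or (`i = j` and `p < q`), a convexly ordered equivalence relation with infinitely many
classes, each densely ordered. -/
def convStructure : Lconv.Structure (ℕ × ℚ) where
  funMap {n} f _ := f.elim
  RelMap {n} r x :=
    match r with
    | .eqv => (x 0).1 = (x 1).1
    | .prec => (x 0).1 < (x 1).1 ∨ ((x 0).1 = (x 1).1 ∧ (x 0).2 < (x 1).2)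

/-- The function symbol of the tree language: the binary meet `∧`. -/
inductive TreeFunc : ℕ → Type
  | meet : TreeFunc 2

/-- The relation symbols of the tree language: `⊴` (initial segment), `<_lex` and `<_len`. -/
inductive TreeRel : ℕ → Type
  | init : TreeRel 2
  | lex : TreeRel 2
  | len : TreeRel 2

/-- The language `{⊴, ∧, <_lex, <_len}` of strong trees. -/
def Ltree : FirstOrder.Language :=
  ⟨TreeFunc, TreeRel⟩

/-- The longest common initial segment of two finite sequences. -/
def listMeet : List ℚ → List ℚ → List ℚ
  | a :: as, b :: bs => if a = b then a :: listMeet as bs else []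
  | _, _ => []

/-- The structure `ℬ` on `ℚ^{<ω}`: `η ⊴ ν` iff `η` is an initial segment of `ν`; `η ∧ ν` is the
longest common initial segment; `η <_lex ν` iff `η` is a proper initial segment of `ν` or
`η(k) < ν(k)` where `k` is the length of `η ∧ ν`; `η <_len ν` iff `η` is shorter than `ν`. -/
def treeStructure : Ltree.Structure (List ℚ) where
  funMap {n} f x := match f with | .meet => listMeet (x 0) (x 1)
  RelMap {n} r x :=
    match r with
    | .init => (x 0) <+: (x 1)
    | .lex => ((x 0) <+: (x 1) ∧ x 0 ≠ x 1) ∨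
        ∃ u v : ℚ, (x 0)[(listMeet (x 0) (x 1)).length]? = some u ∧
          (x 1)[(listMeet (x 0) (x 1)).length]? = some v ∧ u < v
    | .len => (x 0).length < (x 1).length

/-!
Send `(i, q)` to the sequence of `2i` twos followed by `σ q`, where `σ` embeds `ℚ` into `(-1, 1)`
in an order-preserving way. Together with the spine vertices `2^{2i}`, such sequences form a set
closed under `∧`, on which `⊴`, `∧`, `<_lex` and `<_len` are read off from the lexicographic order
of `ℕ × (ℚ ∪ {⊥})` and the order of the first coordinates, and on the meet-closure of a finite
image these depend only on the `{E, ≺}`-type of the points of `𝒜`. Back, send `η` to `(|η|, e η)`, with `e` an order embedding of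
`(ℚ^{<ω}, <_lex)` into `ℚ`: `E` and `≺` are then read off from `<_len` and `<_lex`, and the
composite `(i, q) ↦ (2i + 1, e (…))` preserves `E` and `≺`.
-/

section QfType

open Structure

variable {L : Language} {M : Type*} [L.Structure M] {n : ℕ}

theorem SameQfType.relMap_iff {x y : Fin n → M} (h : SameQfType L M x y) (R : L.Relations 2)
    (a b : Fin n) : RelMap R (x ∘ ![a, b]) ↔ RelMap R (y ∘ ![a, b]) :=
  h (R.boundedFormula fun i => Term.var (Sum.inl (![a, b] i)))
    (BoundedFormula.IsAtomic.rel _ _).isQF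

theorem sameQfType_comp_of_closed {ι : Type*} (u v : ι → M) (idx : Fin n → ι)
    (hfun : ∀ {l} (F : L.Functions l) (s : Fin l → ι),
      ∃ r, funMap F (u ∘ s) = u r ∧ funMap F (v ∘ s) = v r)
    (heq : ∀ s t, u s = u t ↔ v s = v t)
    (hrel : ∀ {l} (R : L.Relations l) (s : Fin l → ι), RelMap R (u ∘ s) ↔ RelMap R (v ∘ s)) :
    SameQfType L M (u ∘ idx) (v ∘ idx) := by
  have hterm : ∀ t : L.Term (Fin n ⊕ Fin 0), ∃ r,
      t.realize (Sum.elim (u ∘ idx) default) = u r ∧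
        t.realize (Sum.elim (v ∘ idx) default) = v r := by
    intro t
    induction t with
    | var a =>
      rcases a with a | k
      · exact ⟨idx a, rfl, rfl⟩
      · exact k.elim0
    | func F ts ih =>
      choose s hsu hsv using ih
      obtain ⟨r, hru, hrv⟩ := hfun F s
      refine ⟨r, ?_, ?_⟩
      · simp only [Term.realize_func, hsu]
        exact hru
      · simp only [Term.realize_func, hsv]
        exact hrv
  intro φ hφ
  induction hφ with
  | falsum => exact Iff.rfl
  | of_isAtomic hat =>
    cases hat with
    | equal t₁ t₂ =>
      obtain ⟨r₁, hu₁, hv₁⟩ := hterm t₁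
      obtain ⟨r₂, hu₂, hv₂⟩ := hterm t₂
      simpa only [Formula.Realize, BoundedFormula.realize_bdEqual, hu₁, hv₁, hu₂, hv₂]
        using heq r₁ r₂
    | rel R ts =>
      choose s hsu hsv using fun i => hterm (ts i)
      simp only [Formula.Realize, BoundedFormula.realize_rel, hsu, hsv]
      exact hrel R s
  | imp _ _ ih₁ ih₂ =>
    simp only [Formula.Realize, BoundedFormula.realize_imp] at ih₁ ih₂ ⊢
    exact imp_congr ih₁ ih₂

end QfType

theorem eq_iff_of_lt_iff {ι α β : Type*} [LinearOrder α] [LinearOrder β] {f : ι → α}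
    {g : ι → β} (h : ∀ s t, f s < f t ↔ g s < g t) (s t : ι) : f s = f t ↔ g s = g t := by
  rw [le_antisymm_iff, le_antisymm_iff, ← not_lt, ← not_lt, ← not_lt, ← not_lt, h, h]

theorem fst_le_iff_eq_or_toLex_lt {α β : Type*} [PartialOrder α] [LT β] {u v : α × β} :
    u.1 ≤ v.1 ↔ u.1 = v.1 ∨ toLex u < toLex v := by
  rw [Prod.Lex.toLex_lt_toLex, le_iff_eq_or_lt]
  tauto

theorem fst_lt_iff_ne_and_toLex_lt {α β : Type*} [Preorder α] [LT β] {u v : α × β} :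
    u.1 < v.1 ↔ u.1 ≠ v.1 ∧ toLex u < toLex v := by
  rw [Prod.Lex.toLex_lt_toLex]
  exact ⟨fun h => ⟨h.ne, .inl h⟩, fun ⟨hne, h⟩ => h.resolve_right fun h' => hne h'.1⟩

section ListMeet

open List

theorem listMeet_prefix_left : ∀ l₁ l₂ : List ℚ, listMeet l₁ l₂ <+: l₁
  | a :: as, b :: bs => by
    unfold listMeet
    split_ifs
    · exact (prefix_cons_inj a).mpr (listMeet_prefix_left as bs)
    · exact nil_prefix
  | [], _ | _ :: _, [] => nil_prefix

theorem listMeet_comm : ∀ l₁ l₂ : List ℚ, listMeet l₁ l₂ = listMeet l₂ l₁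
  | a :: as, b :: bs => by
    unfold listMeet
    by_cases h : a = b
    · rw [if_pos h, if_pos h.symm, listMeet_comm as bs, h]
    · rw [if_neg h, if_neg (Ne.symm h)]
  | [], [] | [], _ :: _ | _ :: _, [] => rfl

theorem listMeet_eq_left_iff {l₁ l₂ : List ℚ} : listMeet l₁ l₂ = l₁ ↔ l₁ <+: l₂ := by
  refine ⟨fun h => h ▸ listMeet_comm l₁ l₂ ▸ listMeet_prefix_left l₂ l₁, fun h => ?_⟩
  induction l₁ generalizing l₂ with
  | nil => cases l₂ <;> rfl
  | cons a as ih =>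
    obtain ⟨t, rfl⟩ := h
    rw [cons_append, listMeet, if_pos rfl, ih (prefix_append as t)]

theorem listMeet_eq_of_getElem?_ne {c l₁ l₂ : List ℚ} (h₁ : c <+: l₁) (h₂ : c <+: l₂)
    (hne : ∀ v, l₁[c.length]? = some v → l₂[c.length]? ≠ some v) : listMeet l₁ l₂ = c := by
  induction c generalizing l₁ l₂ with
  | nil =>
    match l₁, l₂ with
    | a :: as, b :: bs => exact if_neg fun hab => hne a rfl (by simp [hab])
    | [], _ | _ :: _, [] => cases l₂ <;> rfl
  | cons x c ih =>
    obtain ⟨t₁, rfl⟩ := h₁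
    obtain ⟨t₂, rfl⟩ := h₂
    rw [cons_append, cons_append, listMeet, if_pos rfl,
      ih (prefix_append c t₁) (prefix_append c t₂) (by simpa using hne)]

theorem lex_iff_listMeet : ∀ {l₁ l₂ : List ℚ}, List.Lex (· < ·) l₁ l₂ ↔
    (l₁ <+: l₂ ∧ l₁ ≠ l₂) ∨ ∃ u v : ℚ, l₁[(listMeet l₁ l₂).length]? = some u ∧
      l₂[(listMeet l₁ l₂).length]? = some v ∧ u < v
  | [], [] | [], _ :: _ | _ :: _, [] => by simp [listMeet]
  | a :: as, b :: bs => by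
    by_cases hab : a = b
    · subst hab
      simp [listMeet, lex_cons_iff, lex_iff_listMeet (l₁ := as)]
    · simp [listMeet, hab, cons_lt_cons_iff]

end ListMeet

namespace StrongTree

open List

/-- Labels off the spine lie in `(-1, 1)`, so they never coincide with the spine label `2`. -/
def squash (q : ℚ) : ℚ := orderIsoIooNegOneOne ℚ q

theorem squash_strictMono : StrictMono squash :=
  Subtype.strictMono_coe _ |>.comp (orderIsoIooNegOneOne ℚ).strictMono

theorem squash_lt_two (q : ℚ) : squash q < 2 :=
  (orderIsoIooNegOneOne ℚ q).2.2.trans one_lt_two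

/- The spine vertex of class `i` has length `2i`, so a leaf of class `i` (length `2i + 1`) is
strictly shorter than the spine vertex of any later class. -/
def spine (i : ℕ) : List ℚ := replicate (2 * i) 2

def node (a : ℕ × WithBot ℚ) : List ℚ := spine a.1 ++ (Option.map squash a.2).toList

def nodeMeet (a b : ℕ × WithBot ℚ) : ℕ × WithBot ℚ :=
  if a = b then a else (min a.1 b.1, ⊥)

theorem node_bot (i : ℕ) : node (i, ⊥) = spine i := append_nil _

theorem node_coe (i : ℕ) (q : ℚ) : node (i, q) = spine i ++ [squash q] := rfl

theorem length_node (a : ℕ × WithBot ℚ) :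
    (node a).length = 2 * a.1 + if a.2 = ⊥ then 0 else 1 := by
  obtain ⟨i, o⟩ := a
  induction o using WithBot.recBotCoe <;> simp [node_bot, node_coe, spine]

theorem spine_prefix_node {i : ℕ} {a : ℕ × WithBot ℚ} (h : i ≤ a.1) : spine i <+: node a := by
  refine IsPrefix.trans ⟨replicate (2 * a.1 - 2 * i) 2, ?_⟩ (prefix_append _ _)
  rw [spine, spine, ← replicate_add]
  congr 1
  omega

theorem node_getElem?_of_lt {i : ℕ} {a : ℕ × WithBot ℚ} (h : i < a.1) :
    (node a)[2 * i]? = some 2 := by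
  rw [node, getElem?_append_left (by rw [spine, length_replicate]; omega), spine,
    getElem?_replicate, if_pos (by omega)]

theorem node_getElem?_length (a : ℕ × WithBot ℚ) :
    (node a)[2 * a.1]? = Option.map squash a.2 := by
  obtain ⟨i, o⟩ := a
  induction o using WithBot.recBotCoe <;> simp [node_bot, node_coe, spine] <;> rfl

theorem map_squash_ne_some_two (o : WithBot ℚ) : Option.map squash o ≠ some 2 := by
  intro h
  obtain ⟨p, -, hp⟩ := Option.map_eq_some_iff.mp h
  exact (squash_lt_two p).ne hp

theorem listMeet_node (a b : ℕ × WithBot ℚ) :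
    listMeet (node a) (node b) = node (nodeMeet a b) := by
  unfold nodeMeet
  split_ifs with hab
  · rw [hab, listMeet_eq_left_iff.mpr (prefix_refl _)]
  refine node_bot _ ▸ listMeet_eq_of_getElem?_ne (spine_prefix_node (min_le_left _ _))
    (spine_prefix_node (min_le_right _ _)) fun v h₁ h₂ => ?_
  rw [spine, length_replicate] at h₁ h₂
  rcases lt_trichotomy a.1 b.1 with hlt | heq | hgt
  · rw [min_eq_left hlt.le, node_getElem?_length] at h₁
    rw [min_eq_left hlt.le, node_getElem?_of_lt hlt, ← h₁] at h₂
    exact map_squash_ne_some_two _ h₂.symm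
  · rw [min_eq_left heq.le] at h₁ h₂
    rw [node_getElem?_length] at h₁
    rw [heq, node_getElem?_length] at h₂
    exact hab (Prod.ext heq (Option.map_injective squash_strictMono.injective (h₁.trans h₂.symm)))
  · rw [min_eq_right hgt.le, node_getElem?_of_lt hgt] at h₁
    rw [min_eq_right hgt.le, node_getElem?_length, ← h₁] at h₂
    exact map_squash_ne_some_two _ h₂

theorem lex_toList_map_squash_cons_two (o : WithBot ℚ) (l : List ℚ) :
    List.Lex (· < ·) (Option.map squash o).toList (2 :: l) := by
  induction o using WithBot.recBotCoe
  · exact .nil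
  · exact .rel (squash_lt_two _)

theorem lex_toList_map_squash {o o' : WithBot ℚ} (h : o < o') :
    List.Lex (· < ·) (Option.map squash o).toList (Option.map squash o').toList := by
  induction o' using WithBot.recBotCoe with
  | bot => exact absurd h not_lt_bot
  | coe q =>
    induction o using WithBot.recBotCoe with
    | bot => exact .nil
    | coe p => exact .rel (squash_strictMono (WithBot.coe_lt_coe.mp h))

theorem node_strictMono : StrictMono (node ∘ ofLex : ℕ ×ₗ WithBot ℚ → List ℚ) := by
  rintro ⟨i, o⟩ ⟨j, o'⟩ h
  rcases Prod.Lex.lt_iff.mp h with hij | ⟨hij, hoo'⟩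
  · have hspine : spine j = spine i ++ 2 :: replicate (2 * j - 2 * i - 1) 2 := by
      rw [spine, spine, ← replicate_succ, ← replicate_add]
      change i < j at hij
      congr 1
      omega
    show List.Lex (· < ·) (spine i ++ _) (spine j ++ _)
    rw [hspine, append_assoc, cons_append]
    exact .append_left _ (lex_toList_map_squash_cons_two o _) _
  · change i = j at hij
    subst hij
    exact .append_left _ (lex_toList_map_squash hoo') _

theorem node_injective : Function.Injective node :=
  fun _ _ h => toLex_inj.mp (node_strictMono.injective h)

theorem node_lt_node_iff {a b : ℕ × WithBot ℚ} : node a < node b ↔ toLex a < toLex b :=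
  node_strictMono.lt_iff_lt

theorem node_prefix_node_iff {a b : ℕ × WithBot ℚ} : node a <+: node b ↔ nodeMeet a b = a := by
  rw [← listMeet_eq_left_iff, listMeet_node, node_injective.eq_iff]

end StrongTree

section Structures

attribute [local instance] convStructure treeStructure

open StrongTree

theorem sameQfType_conv_iff {n : ℕ} {x y : Fin n → ℕ × ℚ} :
    SameQfType Lconv (ℕ × ℚ) x y ↔
      (∀ a b, (x a).1 = (x b).1 ↔ (y a).1 = (y b).1) ∧
        ∀ a b, toLex (x a) < toLex (x b) ↔ toLex (y a) < toLex (y b) := by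
  refine ⟨fun h => ⟨h.relMap_iff ConvRel.eqv, fun a b => ?_⟩, fun ⟨hfst, hlex⟩ => ?_⟩
  · rw [Prod.Lex.toLex_lt_toLex, Prod.Lex.toLex_lt_toLex]
    exact h.relMap_iff ConvRel.prec a b
  · refine sameQfType_comp_of_closed x y id (fun F => Empty.elim F) (fun s t => ?_) fun R s => ?_
    · simpa only [toLex_inj] using eq_iff_of_lt_iff hlex s t
    · cases R with
      | eqv => exact hfst (s 0) (s 1)
      | prec =>
        have := hlex (s 0) (s 1)
        rwa [Prod.Lex.toLex_lt_toLex, Prod.Lex.toLex_lt_toLex] at this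

theorem sameQfType_node {ι : Type*} {n : ℕ} (P Q : ι → ℕ × WithBot ℚ) (idx : Fin n → ι)
    (hspine : ∀ s t, ∃ r, P r = (min (P s).1 (P t).1, ⊥) ∧ Q r = (min (Q s).1 (Q t).1, ⊥))
    (hfst : ∀ s t, (P s).1 ≤ (P t).1 ↔ (Q s).1 ≤ (Q t).1)
    (hlex : ∀ s t, toLex (P s) < toLex (P t) ↔ toLex (Q s) < toLex (Q t))
    (hbot : ∀ s, (P s).2 = ⊥ ↔ (Q s).2 = ⊥) :
    SameQfType Ltree (List ℚ) (node ∘ P ∘ idx) (node ∘ Q ∘ idx) := by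
  have heq : ∀ s t, P s = P t ↔ Q s = Q t := by
    simpa only [toLex_inj] using eq_iff_of_lt_iff hlex
  have hmeet : ∀ s t, ∃ r, P r = nodeMeet (P s) (P t) ∧ Q r = nodeMeet (Q s) (Q t) := by
    intro s t
    by_cases hst : P s = P t
    · exact ⟨s, by simp [nodeMeet, hst, (heq s t).mp hst]⟩
    · obtain ⟨r, hP, hQ⟩ := hspine s t
      exact ⟨r, by simp [nodeMeet, hst, mt (heq s t).mpr hst, hP, hQ]⟩
  refine sameQfType_comp_of_closed (node ∘ P) (node ∘ Q) idx ?_ ?_ ?_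
  · rintro _ ⟨⟩ s
    obtain ⟨r, hP, hQ⟩ := hmeet (s 0) (s 1)
    exact ⟨r, (listMeet_node _ _).trans (congrArg node hP.symm),
      (listMeet_node _ _).trans (congrArg node hQ.symm)⟩
  · intro s t
    exact node_injective.eq_iff.trans ((heq s t).trans node_injective.eq_iff.symm)
  · rintro _ (_ | _ | _) s
    · obtain ⟨r, hP, hQ⟩ := hmeet (s 0) (s 1)
      show node (P (s 0)) <+: node (P (s 1)) ↔ node (Q (s 0)) <+: node (Q (s 1))
      rw [node_prefix_node_iff, node_prefix_node_iff, ← hP, ← hQ, heq]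
    · exact lex_iff_listMeet.symm.trans
        ((node_lt_node_iff.trans ((hlex _ _).trans node_lt_node_iff.symm)).trans lex_iff_listMeet)
    · show (node (P (s 0))).length < (node (P (s 1))).length ↔
        (node (Q (s 0))).length < (node (Q (s 1))).length
      have h₀₁ := hfst (s 0) (s 1)
      have h₁₀ := hfst (s 1) (s 0)
      simp only [length_node, hbot]
      split_ifs <;> omega

def toTree : ℕ × ℚ → List ℚ := node ∘ Prod.map id (↑)

noncomputable def lexEmbedding : List ℚ ↪o ℚ :=
  (Order.embedding_from_countable_to_dense (List ℚ) ℚ).some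

noncomputable def ofTree (l : List ℚ) : ℕ × ℚ := (l.length, lexEmbedding l)

/-- Indexes the meet-closure of `toTree ∘ x`: `(a, true)` is the leaf `toTree (x a)`, `(a, false)`
the spine vertex of its class. -/
def withSpine {n : ℕ} (x : Fin n → ℕ × ℚ) (s : Fin n × Bool) : ℕ × WithBot ℚ :=
  ((x s.1).1, bif s.2 then ((x s.1).2 : WithBot ℚ) else ⊥)

theorem qftpRespecting_toTree : QftpRespecting Lconv Ltree (ℕ × ℚ) (List ℚ) toTree := by
  refine ⟨node_injective.comp (Prod.map_injective.mpr ⟨Function.injective_id,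
    WithBot.coe_injective⟩), fun n x y h => ?_⟩
  obtain ⟨hfst, hlex⟩ := sameQfType_conv_iff.mp h
  have hle : ∀ a b, (x a).1 ≤ (x b).1 ↔ (y a).1 ≤ (y b).1 := by
    simp only [fst_le_iff_eq_or_toLex_lt, hfst, hlex, implies_true]
  have hlt : ∀ a b, (x a).1 < (x b).1 ↔ (y a).1 < (y b).1 := by
    simp only [fst_lt_iff_ne_and_toLex_lt, ne_eq, hfst, hlex, implies_true]
  refine sameQfType_node (withSpine x) (withSpine y) (·, true) ?_ (fun s t => hle s.1 t.1) ?_ ?_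
  · rintro ⟨a, -⟩ ⟨b, -⟩
    by_cases hab : (x a).1 ≤ (x b).1
    · exact ⟨(a, false), by simp [withSpine, hab, (hle a b).mp hab]⟩
    · exact ⟨(b, false), by simp [withSpine, min_def, hab, mt (hle a b).mpr hab]⟩
  · rintro ⟨a, _ | _⟩ ⟨b, _ | _⟩ <;>
      simp only [withSpine, cond_true, cond_false, Prod.Lex.toLex_lt_toLex, WithBot.coe_lt_coe,
        WithBot.bot_lt_coe, not_lt_bot, lt_self_iff_false, and_true, and_false, or_false]
    · exact hlt a b
    · rw [hlt a b, hfst a b]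
    · exact hlt a b
    · rw [← Prod.Lex.toLex_lt_toLex, ← Prod.Lex.toLex_lt_toLex]
      exact hlex a b
  · rintro ⟨a, _ | _⟩ <;> simp [withSpine]

theorem toLex_ofTree_lt_iff {l₁ l₂ : List ℚ} :
    toLex (ofTree l₁) < toLex (ofTree l₂) ↔
      l₁.length < l₂.length ∨ l₁.length = l₂.length ∧ l₁ < l₂ := by
  simp only [Prod.Lex.toLex_lt_toLex, ofTree, OrderEmbedding.lt_iff_lt]

theorem qftpRespecting_ofTree : QftpRespecting Ltree Lconv (List ℚ) (ℕ × ℚ) ofTree := by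
  refine ⟨fun l₁ l₂ h => lexEmbedding.injective (congrArg Prod.snd h), fun n x y h => ?_⟩
  have hlen : ∀ a b, (x a).length < (x b).length ↔ (y a).length < (y b).length :=
    h.relMap_iff TreeRel.len
  have hlen_eq : ∀ a b, (x a).length = (x b).length ↔ (y a).length = (y b).length := by
    intro a b
    have := hlen a b
    have := hlen b a
    omega
  have hlt : ∀ a b, x a < x b ↔ y a < y b := fun a b =>
    lex_iff_listMeet.trans ((h.relMap_iff TreeRel.lex a b).trans lex_iff_listMeet.symm)
  refine sameQfType_conv_iff.mpr ⟨hlen_eq, fun a b => ?_⟩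
  simp only [Function.comp_apply, toLex_ofTree_lt_iff, hlen, hlen_eq, hlt]

theorem toLex_ofTree_toTree_lt_iff {u v : ℕ × ℚ} :
    toLex (ofTree (toTree u)) < toLex (ofTree (toTree v)) ↔ toLex u < toLex v := by
  have hfst : ∀ i j : ℕ, 2 * i + 1 < 2 * j + 1 ↔ i < j := by omega
  have hfst_eq : ∀ i j : ℕ, 2 * i + 1 = 2 * j + 1 ↔ i = j := by omega
  rw [toLex_ofTree_lt_iff]
  simp only [toTree, Function.comp_apply, length_node, node_lt_node_iff, Prod.map_fst,
    Prod.map_snd, id_eq, WithBot.coe_ne_bot, if_false, Prod.Lex.toLex_lt_toLex,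
    WithBot.coe_lt_coe, hfst, hfst_eq]
  tauto

theorem sameQfType_ofTree_toTree {n : ℕ} (x : Fin n → ℕ × ℚ) :
    SameQfType Lconv (ℕ × ℚ) x (ofTree ∘ toTree ∘ x) := by
  refine sameQfType_conv_iff.mpr ⟨fun a b => ?_, fun a b => toLex_ofTree_toTree_lt_iff.symm⟩
  simp [ofTree, toTree, length_node]

end Structures

/-- Proposition 3.8 / `treeprop`: the densely ordered convex equivalence
relation `𝒜` on `ω × ℚ` is a semi-retract of the strong tree `ℬ` on `ℚ^{<ω}`. -/
theorem convEquivalence_semiRetract_of_strongTree :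
    ∃ (g : ℕ × ℚ → List ℚ) (f : List ℚ → ℕ × ℚ),
      @IsSemiRetraction Lconv Ltree (ℕ × ℚ) (List ℚ) convStructure treeStructure g f :=
  ⟨toTree, ofTree, qftpRespecting_toTree, qftpRespecting_ofTree,
    fun _ => sameQfType_ofTree_toTree⟩
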